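/- arXiv:1702.06867 — 2 statements merged into one kernel-verified Lean document; each statement's English description precedes it below -/
import Mathlib

section
/- Let 0 < s < 1 and 0 < α < 2s. There exists a constant C > 0 (depending only on s and α) such that for every integer n ≥ 4 one has ∑_{k+l=n, k≥2, l≥2} (μ_{k,l})² · l^{3/2+α−s} · k^{3/2+α} ≤ C · n^{s+3/2+α}. -/
open Real MeasureTheory Finset

/-- The coefficients `μ_{k,l}` in the expansion `Γ(φ_k, φ_l) = μ_{k,l} φ_{k+l}` of the
radially symmetric non-cutoff Boltzmann collision operator, for the model angular kernel
`β(θ) = (sin θ)^{-1-2s} cos θ`. -/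
noncomputable def boltzMu (s : ℝ) (k l : ℕ) : ℝ :=
  Real.sqrt ((Nat.factorial (2 * k + 2 * l + 1) : ℝ) /
      ((Nat.factorial (2 * k + 1) : ℝ) * (Nat.factorial (2 * l + 1) : ℝ))) *
    ∫ θ in (0:ℝ)..(Real.pi / 4),
      Real.sin θ ^ (2 * (k : ℝ) - 1 - 2 * s) * Real.cos θ ^ (2 * l + 1)

/-!
Substituting `t = sin² θ` turns the integral in `μ_{k,l}` into half of an incomplete Beta
integral, hence at most `B(k - s, l + 1) / 2 = l! / (2 ∏_{j ≤ l} (k - s + j))`. Weighted AM-GM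
on each factor (a product form of Wendel's inequality `Γ(x + s) ≤ x ^ s Γ(x)`) compares this
with `(k - 1)! l! / (k + l)!` at the cost of a factor `((k + l) / k) ^ s`. What remains of
`μ_{k,l}²` is a quotient of central binomial coefficients, which
`4 ^ k ≤ 2 √k C(2k, k)` and `C(2(k + l), k + l) ≤ 4 ^ k C(2l, l)` bound by
`√((k + l) / (k l))`.
So the `k`-th term of the sum is `O(n ^ (s + 3/2 + α) k ^ (-(1 + (2s - α))))`, and these
powers of `k` are summable because `α < 2s`.
-/

open scoped Nat

namespace Nat

theorem centralBinom_succ_le (n : ℕ) : centralBinom (n + 1) ≤ 4 * centralBinom n := by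
  refine Nat.le_of_mul_le_mul_left ?_ n.succ_pos
  rw [succ_mul_centralBinom_succ]
  nlinarith

theorem centralBinom_add_le (n k : ℕ) : centralBinom (n + k) ≤ 4 ^ k * centralBinom n := by
  induction k with
  | zero => simp
  | succ k ih =>
    calc centralBinom (n + k + 1) ≤ 4 * centralBinom (n + k) := centralBinom_succ_le _
      _ ≤ 4 ^ (k + 1) * centralBinom n := by rw [pow_succ', mul_assoc]; gcongr

theorem four_pow_sq_le_mul_centralBinom_sq {n : ℕ} (hn : 0 < n) :
    (4 ^ n) ^ 2 ≤ 4 * n * centralBinom n ^ 2 := by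
  induction n, hn using Nat.le_induction with
  | base => decide
  | succ n hn ih =>
    refine Nat.le_of_mul_le_mul_right ?_ (pow_pos n.succ_pos 2)
    calc (4 ^ (n + 1)) ^ 2 * (n + 1) ^ 2 = 16 * (n + 1) * ((4 ^ n) ^ 2 * (n + 1)) := by ring
      _ ≤ 16 * (n + 1) * (4 * n * centralBinom n ^ 2 * (n + 1)) := by gcongr
      _ = 16 * (n + 1) * (4 * n * (n + 1) * centralBinom n ^ 2) := by ring
      _ ≤ 16 * (n + 1) * ((2 * n + 1) ^ 2 * centralBinom n ^ 2) := by
        gcongr; nlinarith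
      _ = 4 * (n + 1) * ((n + 1) * centralBinom (n + 1)) ^ 2 := by
        rw [succ_mul_centralBinom_succ]; ring
      _ = 4 * (n + 1) * centralBinom (n + 1) ^ 2 * (n + 1) ^ 2 := by ring

theorem centralBinom_add_sq_mul_le {k l : ℕ} (hk : 0 < k) (hl : 0 < l) :
    centralBinom (k + l) ^ 2 * (k + l) ≤ 8 * k * l * (centralBinom k * centralBinom l) ^ 2 := by
  wlog hkl : k ≤ l generalizing k l
  · rw [add_comm]
    exact (this hl hk (by omega)).trans_eq (by ring)
  calc centralBinom (k + l) ^ 2 * (k + l) ≤ (4 ^ k * centralBinom l) ^ 2 * (2 * l) := by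
        rw [add_comm k l]; gcongr
        · exact centralBinom_add_le l k
        · omega
    _ = (4 ^ k) ^ 2 * (2 * l * centralBinom l ^ 2) := by ring
    _ ≤ 4 * k * centralBinom k ^ 2 * (2 * l * centralBinom l ^ 2) := by
        gcongr; exact four_pow_sq_le_mul_centralBinom_sq hk
    _ = 8 * k * l * (centralBinom k * centralBinom l) ^ 2 := by ring

theorem factorial_two_mul_add_one (m : ℕ) :
    (2 * m + 1)! = (2 * m + 1) * centralBinom m * m ! ^ 2 := by
  rw [factorial_succ, centralBinom_eq_two_mul_choose, ← choose_mul_factorial_mul_factorial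
    (show m ≤ 2 * m by omega), show 2 * m - m = m by omega]
  ring

end Nat

lemma factorial_ratio_le_sqrt {k l : ℕ} (hk : 0 < k) (hl : 0 < l) :
    ((2 * k + 2 * l + 1)! : ℝ) / ((2 * k + 1)! * (2 * l + 1)!)
      * ((k ! * l ! : ℝ) / (k + l)!) ^ 2 ≤ 3 * √((k + l) / (k * l)) := by
  have hK : (1 : ℝ) ≤ k := by exact_mod_cast hk
  have hL : (1 : ℝ) ≤ l := by exact_mod_cast hl
  have hkl : (0 : ℝ) < k * l := by positivity
  set q : ℝ := (2 * (k + l) + 1) / ((2 * k + 1) * (2 * l + 1))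
  set r : ℝ := Nat.centralBinom (k + l) / (Nat.centralBinom k * Nat.centralBinom l)
  have hsplit : ((2 * k + 2 * l + 1)! : ℝ) / ((2 * k + 1)! * (2 * l + 1)!)
      * ((k ! * l ! : ℝ) / (k + l)!) ^ 2 = q * r := by
    rw [show 2 * k + 2 * l + 1 = 2 * (k + l) + 1 by ring]
    simp only [Nat.factorial_two_mul_add_one, q, r]
    push_cast
    field_simp
  have hq : q * (4 * k * l) ≤ 3 * (k + l) := by
    rw [div_mul_eq_mul_div, div_le_iff₀ (by positivity)]
    nlinarith [mul_le_mul hK hL zero_le_one (by linarith)]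
  have hr : r ^ 2 * (k + l) ≤ 8 * k * l := by
    have := Nat.centralBinom_pos k
    have := Nat.centralBinom_pos l
    rw [div_pow, div_mul_eq_mul_div, div_le_iff₀ (by positivity)]
    exact_mod_cast Nat.centralBinom_add_sq_mul_le hk hl
  have hsq : (q * r) ^ 2 * (k * l) * (16 * k * l * (k + l))
      ≤ 3 ^ 2 * ((k : ℝ) + l) * (16 * k * l * (k + l)) :=
    calc (q * r) ^ 2 * (k * l) * (16 * k * l * (k + l))
        = (q * (4 * k * l)) ^ 2 * (r ^ 2 * (k + l)) := by ring
      _ ≤ (3 * ((k : ℝ) + l)) ^ 2 * (8 * k * l) := by gcongr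
      _ ≤ 3 ^ 2 * ((k : ℝ) + l) * (16 * k * l * (k + l)) := by nlinarith
  rw [hsplit, ← sqrt_sq (show (0 : ℝ) ≤ 3 by norm_num), ← sqrt_mul (by positivity)]
  apply le_sqrt_of_sq_le
  calc (q * r) ^ 2 ≤ (3 : ℝ) ^ 2 * (k + l) / (k * l) := by
        rw [le_div_iff₀ hkl]
        exact le_of_mul_le_mul_right hsq (by positivity)
    _ = (3 : ℝ) ^ 2 * ((k + l) / (k * l)) := mul_div_assoc _ _ _

lemma integral_rpow_mul_one_sub_pow {p : ℝ} (hp : 0 < p) (l : ℕ) :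
    ∫ t in (0 : ℝ)..1, t ^ (p - 1) * (1 - t) ^ l = l ! / ∏ j ∈ range (l + 1), (p + j) := by
  have hβ := Complex.betaIntegral_eval_nat_add_one_right (u := p) (by simpa using hp) l
  rw [Complex.betaIntegral] at hβ
  have hcongr : ∀ t ∈ Set.uIcc (0 : ℝ) 1, ((t ^ (p - 1) * (1 - t) ^ l : ℝ) : ℂ)
      = (t : ℂ) ^ ((p : ℂ) - 1) * (1 - (t : ℂ)) ^ ((l : ℂ) + 1 - 1) := by
    intro t ht
    rw [Set.uIcc_of_le zero_le_one] at ht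
    rw [add_sub_cancel_right, Complex.cpow_natCast, Complex.ofReal_mul,
      Complex.ofReal_cpow ht.1]
    push_cast
    ring_nf
  have hℂ : ((∫ t in (0 : ℝ)..1, t ^ (p - 1) * (1 - t) ^ l : ℝ) : ℂ)
      = ((l ! / ∏ j ∈ range (l + 1), (p + j) : ℝ) : ℂ) := by
    rw [← intervalIntegral.integral_ofReal, intervalIntegral.integral_congr hcongr, hβ]
    push_cast
    rfl
  exact_mod_cast hℂ

lemma integral_sin_rpow_mul_cos_pow {p : ℝ} (hp : 1 ≤ p) (l : ℕ) {b : ℝ} (hb₀ : 0 ≤ b)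
    (hbπ : b ≤ π) :
    ∫ θ in (0 : ℝ)..b, sin θ ^ (2 * p - 1) * cos θ ^ (2 * l + 1)
      = 1 / 2 * ∫ t in (0 : ℝ)..(sin b ^ 2), t ^ (p - 1) * (1 - t) ^ l := by
  have hsub := intervalIntegral.integral_comp_mul_deriv (a := 0) (b := b)
    (f := fun θ => sin θ ^ 2) (f' := fun θ => 2 * sin θ * cos θ)
    (g := fun t => t ^ (p - 1) * (1 - t) ^ l)
    (fun θ _ => by simpa [mul_comm, mul_assoc] using (hasDerivAt_sin θ).fun_pow 2)
    (by fun_prop) ((continuous_rpow_const (by linarith)).mul (by fun_prop))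
  simp only [Function.comp_def, sin_zero, zero_pow two_ne_zero] at hsub
  rw [← hsub, ← intervalIntegral.integral_const_mul]
  refine intervalIntegral.integral_congr fun θ hθ => ?_
  rw [Set.uIcc_of_le hb₀] at hθ
  have hsin : 0 ≤ sin θ := sin_nonneg_of_nonneg_of_le_pi hθ.1 (hθ.2.trans hbπ)
  have hpow : sin θ ^ (2 * p - 1) = (sin θ ^ 2) ^ (p - 1) * sin θ := by
    rw [← rpow_natCast, ← rpow_mul hsin, ← rpow_add_one' hsin (by push_cast; linarith)]
    congr 1
    push_cast
    ring
  rw [hpow, ← cos_sq']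
  ring

lemma integral_sin_rpow_mul_cos_pow_le {p : ℝ} (hp : 1 ≤ p) (l : ℕ) :
    ∫ θ in (0 : ℝ)..π / 4, sin θ ^ (2 * p - 1) * cos θ ^ (2 * l + 1)
      ≤ l ! / (2 * ∏ j ∈ range (l + 1), (p + j)) := by
  have hsin : sin (π / 4) ^ 2 = 1 / 2 := by
    rw [sin_pi_div_four, div_pow, sq_sqrt zero_le_two]; norm_num
  have hmono : ∫ t in (0 : ℝ)..1 / 2, t ^ (p - 1) * (1 - t) ^ l
      ≤ ∫ t in (0 : ℝ)..1, t ^ (p - 1) * (1 - t) ^ l := by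
    refine intervalIntegral.integral_mono_interval le_rfl (by norm_num) (by norm_num)
      (ae_restrict_of_forall_mem measurableSet_Ioc fun t ht => ?_) ?_
    · exact mul_nonneg (rpow_nonneg ht.1.le _) (pow_nonneg (by linarith [ht.2]) _)
    · exact (intervalIntegral.intervalIntegrable_rpow' (by linarith)).mul_continuousOn
        (by fun_prop)
  calc _ = 1 / 2 * ∫ t in (0 : ℝ)..1 / 2, t ^ (p - 1) * (1 - t) ^ l := by
        rw [integral_sin_rpow_mul_cos_pow hp l (by positivity) (by linarith [pi_pos]), hsin]
    _ ≤ 1 / 2 * ∫ t in (0 : ℝ)..1, t ^ (p - 1) * (1 - t) ^ l := by gcongr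
    _ = l ! / (2 * ∏ j ∈ range (l + 1), (p + j)) := by
        rw [integral_rpow_mul_one_sub_pow (by linarith)]; ring

lemma integral_sin_rpow_mul_cos_pow_nonneg (a : ℝ) (m : ℕ) :
    0 ≤ ∫ θ in (0 : ℝ)..π / 4, sin θ ^ a * cos θ ^ m := by
  refine intervalIntegral.integral_nonneg (by positivity) fun θ hθ => ?_
  have hsin : 0 ≤ sin θ := sin_nonneg_of_nonneg_of_le_pi hθ.1 (by linarith [hθ.2, pi_pos])
  have hcos : 0 ≤ cos θ :=
    cos_nonneg_of_mem_Icc ⟨by linarith [hθ.1, pi_pos], by linarith [hθ.2, pi_pos]⟩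
  exact mul_nonneg (rpow_nonneg hsin a) (pow_nonneg hcos m)

lemma mul_prod_range_add_one (x : ℝ) (m : ℕ) :
    x * ∏ j ∈ range m, (x + 1 + j) = (x + m) * ∏ j ∈ range m, (x + j) := by
  have h := prod_range_succ' (fun j : ℕ => x + j) m
  rw [prod_range_succ] at h
  simp only [Nat.cast_add, Nat.cast_one, Nat.cast_zero, add_zero] at h
  rw [mul_comm (x + m), h, mul_comm]
  exact congrArg (· * x) (prod_congr rfl fun j _ => by ring)

/-- A rising-product form of Wendel's inequality `Γ(x + s) ≤ x ^ s Γ(x)`: weighted AM-GM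
`(x + j) ^ s (x + 1 + j) ^ (1 - s) ≤ x + 1 - s + j` on each factor. -/
lemma rpow_div_mul_prod_range_le {x s : ℝ} (hx : 0 < x) (hs₀ : 0 ≤ s) (hs₁ : s ≤ 1)
    (m : ℕ) :
    (x / (x + m)) ^ s * ∏ j ∈ range m, (x + 1 + j) ≤ ∏ j ∈ range m, (x + 1 - s + j) := by
  set P := ∏ j ∈ range m, (x + 1 + j)
  have hP : 0 < P := prod_pos fun j _ => by positivity
  have hP₀ : ∏ j ∈ range m, (x + j) = x / (x + m) * P := by
    rw [div_mul_eq_mul_div, eq_div_iff (by positivity)]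
    linarith [mul_prod_range_add_one x m]
  calc (x / (x + m)) ^ s * P = (x / (x + m) * P) ^ s * P ^ (1 - s) := by
        rw [mul_rpow (by positivity) hP.le, mul_assoc, ← rpow_add hP]; simp
    _ = ∏ j ∈ range m, ((x + j) ^ s * (x + 1 + j) ^ (1 - s)) := by
        rw [← hP₀, prod_mul_distrib, finsetProd_rpow _ _ (fun j _ => by positivity),
          finsetProd_rpow _ _ (fun j _ => by positivity)]
    _ ≤ ∏ j ∈ range m, (x + 1 - s + j) := by
        refine prod_le_prod (fun j _ => by positivity) fun j _ => ?_
        exact (geom_mean_le_arith_mean2_weighted hs₀ (sub_nonneg.2 hs₁)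
          (by positivity) (by positivity) (by ring)).trans_eq (by ring)

lemma factorial_mul_prod_range_add {k : ℕ} (hk : 0 < k) (l : ℕ) :
    ((k - 1)! : ℝ) * ∏ j ∈ range (l + 1), ((k : ℝ) + j) = (k + l)! := by
  have h := Nat.factorial_mul_ascFactorial (k - 1) (l + 1)
  rw [Nat.ascFactorial_eq_prod_range, Nat.sub_add_cancel hk,
    show k - 1 + (l + 1) = k + l by omega] at h
  exact_mod_cast h

lemma rpow_div_mul_prod_range_le_two_mul {s : ℝ} (hs₀ : 0 ≤ s) (hs₁ : s ≤ 1) {k : ℕ}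
    (hk : 2 ≤ k) (l : ℕ) :
    (k / (k + l) : ℝ) ^ s * ∏ j ∈ range (l + 1), ((k : ℝ) + j)
      ≤ 2 * ∏ j ∈ range (l + 1), ((k : ℝ) - s + j) := by
  have hK : (2 : ℝ) ≤ k := by exact_mod_cast hk
  have hk₁ : (0 : ℝ) < (k - 1) / (k + l) := div_pos (by linarith) (by positivity)
  have hwendel := rpow_div_mul_prod_range_le (x := k - 1) (by linarith) hs₀ hs₁ (l + 1)
  rw [show (k : ℝ) - 1 + (l + 1 : ℕ) = k + l by push_cast; ring] at hwendel
  simp only [sub_add_cancel] at hwendel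
  have hratio : (k / (k + l) : ℝ) ^ s ≤ 2 * ((k - 1) / (k + l)) ^ s :=
    calc (k / (k + l) : ℝ) ^ s ≤ (2 * ((k - 1) / (k + l))) ^ s := by
          gcongr
          rw [mul_div_assoc']
          gcongr
          linarith
      _ = 2 ^ s * ((k - 1) / (k + l)) ^ s := mul_rpow zero_le_two hk₁.le
      _ ≤ 2 * ((k - 1) / (k + l)) ^ s := by
          refine mul_le_mul_of_nonneg_right ?_ (rpow_nonneg hk₁.le _)
          simpa using rpow_le_rpow_of_exponent_le one_le_two hs₁
  calc _ ≤ 2 * ((k - 1) / (k + l)) ^ s * ∏ j ∈ range (l + 1), ((k : ℝ) + j) := by gcongr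
    _ ≤ _ := by rw [mul_assoc]; gcongr

lemma integral_sin_rpow_mul_cos_pow_le_factorial {s : ℝ} (hs₀ : 0 ≤ s) (hs₁ : s ≤ 1)
    {k : ℕ} (hk : 2 ≤ k) (l : ℕ) :
    ∫ θ in (0 : ℝ)..π / 4, sin θ ^ (2 * (k : ℝ) - 1 - 2 * s) * cos θ ^ (2 * l + 1)
      ≤ k ! * l ! / (k + l)! * ((k + l) / k) ^ s / k := by
  have hK : (2 : ℝ) ≤ k := by exact_mod_cast hk
  have hfac : ((k - 1)! : ℝ) * k = k ! := by
    rw [← Nat.cast_mul, mul_comm, Nat.mul_factorial_pred (by omega)]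
  calc _ ≤ l ! / (2 * ∏ j ∈ range (l + 1), ((k : ℝ) - s + j)) := by
        rw [show 2 * (k : ℝ) - 1 - 2 * s = 2 * (k - s) - 1 by ring]
        exact integral_sin_rpow_mul_cos_pow_le (by linarith) l
    _ ≤ l ! / ((k / (k + l) : ℝ) ^ s * ∏ j ∈ range (l + 1), ((k : ℝ) + j)) :=
        div_le_div_of_nonneg_left (by positivity)
          (mul_pos (by positivity) (prod_pos fun j _ => by positivity))
          (rpow_div_mul_prod_range_le_two_mul hs₀ hs₁ hk l)
    _ = k ! * l ! / (k + l)! * ((k + l) / k) ^ s / k := by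
        rw [← factorial_mul_prod_range_add (by omega), ← hfac,
          div_rpow (by positivity) (by positivity), div_rpow (by positivity) (by positivity)]
        field_simp

lemma boltzMu_sq_le {s : ℝ} (hs₀ : 0 ≤ s) (hs₁ : s ≤ 1) {k l : ℕ} (hk : 2 ≤ k)
    (hl : 0 < l) :
    boltzMu s k l ^ 2 ≤ 3 * √((k + l) / (k * l)) * (((k + l) / k : ℝ) ^ s) ^ 2 / k ^ 2 := by
  rw [boltzMu, mul_pow, sq_sqrt (by positivity)]
  calc _ ≤ ((2 * k + 2 * l + 1)! : ℝ) / ((2 * k + 1)! * (2 * l + 1)!)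
        * (k ! * l ! / (k + l)! * ((k + l) / k : ℝ) ^ s / k) ^ 2 := by
        gcongr
        · exact integral_sin_rpow_mul_cos_pow_nonneg _ _
        · exact integral_sin_rpow_mul_cos_pow_le_factorial hs₀ hs₁ hk l
    _ = ((2 * k + 2 * l + 1)! : ℝ) / ((2 * k + 1)! * (2 * l + 1)!)
        * ((k ! * l ! : ℝ) / (k + l)!) ^ 2 * ((((k + l) / k : ℝ) ^ s) ^ 2 / k ^ 2) := by ring
    _ ≤ 3 * √((k + l) / (k * l)) * ((((k + l) / k : ℝ) ^ s) ^ 2 / k ^ 2) :=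
        mul_le_mul_of_nonneg_right (factorial_ratio_le_sqrt (by omega) hl)
          (by positivity)
    _ = _ := by ring

lemma sqrt_div_mul_rpow_eq {N K L s α : ℝ} (hN : 0 < N) (hK : 0 < K) (hL : 0 < L) :
    √(N / (K * L)) * ((N / K) ^ s) ^ 2 / K ^ 2 * L ^ (3 / 2 + α - s) * K ^ (3 / 2 + α)
      = N ^ (1 / 2 + 2 * s) * L ^ (1 + α - s) * K ^ (-(1 + (2 * s - α))) := by
  rw [show 1 / 2 + 2 * s = 1 / 2 + s + s by ring, rpow_add hN, rpow_add hN,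
    show 1 + α - s = 3 / 2 + α - s - 1 / 2 by ring, rpow_sub hL (3 / 2 + α - s),
    show -(1 + (2 * s - α)) = 3 / 2 + α - 1 / 2 - s - s - 2 by ring, rpow_sub hK _ 2,
    rpow_sub hK _ s, rpow_sub hK _ s, rpow_sub hK (3 / 2 + α), rpow_two, sqrt_eq_rpow,
    div_rpow hN.le (by positivity), mul_rpow hK.le hL.le, div_rpow hN.le hK.le]
  ring

lemma boltzMu_sq_mul_rpow_le {s α : ℝ} (hs₀ : 0 ≤ s) (hs₁ : s ≤ 1) (hsα : s ≤ 1 + α)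
    {k l : ℕ} (hk : 2 ≤ k) (hl : 0 < l) :
    boltzMu s k l ^ 2 * (l : ℝ) ^ (3 / 2 + α - s) * (k : ℝ) ^ (3 / 2 + α)
      ≤ 3 * ((k : ℝ) + l) ^ (s + 3 / 2 + α) * (k : ℝ) ^ (-(1 + (2 * s - α))) := by
  have hK : (0 : ℝ) < k := by positivity
  have hL : (0 : ℝ) < l := by positivity
  have hN : (0 : ℝ) < k + l := by positivity
  calc _ ≤ 3 * √((k + l) / (k * l)) * (((k + l) / k : ℝ) ^ s) ^ 2 / k ^ 2
        * (l : ℝ) ^ (3 / 2 + α - s) * (k : ℝ) ^ (3 / 2 + α) := by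
        gcongr
        exact boltzMu_sq_le hs₀ hs₁ hk hl
    _ = 3 * (((k : ℝ) + l) ^ (1 / 2 + 2 * s) * (l : ℝ) ^ (1 + α - s)
        * (k : ℝ) ^ (-(1 + (2 * s - α)))) := by
        rw [← sqrt_div_mul_rpow_eq hN hK hL]; ring
    _ ≤ 3 * (((k : ℝ) + l) ^ (1 / 2 + 2 * s) * ((k : ℝ) + l) ^ (1 + α - s)
        * (k : ℝ) ^ (-(1 + (2 * s - α)))) := by
        gcongr
        linarith
    _ = _ := by rw [← rpow_add hN]; ring_nf

theorem sum_mu_sq_weighted_le (s α : ℝ) (hs : 0 < s) (hs1 : s < 1)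
    (hα : 0 < α) (hαs : α < 2 * s) :
    ∃ C > 0, ∀ n : ℕ, 4 ≤ n →
      ∑ k ∈ Finset.Icc 2 (n - 2),
          (boltzMu s k (n - k)) ^ 2 * ((n - k : ℕ) : ℝ) ^ ((3:ℝ)/2 + α - s) *
            (k : ℝ) ^ ((3:ℝ)/2 + α)
        ≤ C * (n : ℝ) ^ (s + 3/2 + α) := by
  set w : ℕ → ℝ := fun k => (k : ℝ) ^ (-(1 + (2 * s - α)))
  have hw : Summable w := summable_nat_rpow.2 (by linarith)
  have hw₀ : ∀ k, 0 ≤ w k := fun k => rpow_nonneg k.cast_nonneg _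
  refine ⟨3 * ∑' k, w k, mul_pos three_pos (hw.tsum_pos hw₀ 1 (by simp [w])), fun n _ => ?_⟩
  calc _ ≤ ∑ k ∈ Icc 2 (n - 2), 3 * (n : ℝ) ^ (s + 3 / 2 + α) * w k := by
        refine sum_le_sum fun k hk => ?_
        obtain ⟨hk₂, hkn⟩ := mem_Icc.1 hk
        have hn : (n : ℝ) = k + (n - k : ℕ) := by
          rw [← Nat.cast_add, Nat.add_sub_cancel' (by omega)]
        rw [hn]
        exact boltzMu_sq_mul_rpow_le hs.le hs1.le (by linarith) hk₂ (by omega)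
    _ = 3 * (n : ℝ) ^ (s + 3 / 2 + α) * ∑ k ∈ Icc 2 (n - 2), w k := by rw [mul_sum]
    _ ≤ 3 * (n : ℝ) ^ (s + 3 / 2 + α) * ∑' k, w k := by
        gcongr
        exact hw.sum_le_tsum _ fun k _ => hw₀ k
    _ = _ := by ring
end

section
/- Let α > 0. Then the series ∑_{k≥2} k^{−3/2−α} · Γ(k + 3/2) / k! converges. Consequently, the initial datum g⁰ = μ^{−1/2} δ_0 − √μ − (3/2 − |v|²/2)√μ, whose coefficients on the radial Laguerre eigenbasis satisfy ⟨g⁰, φ_k⟩² = 2 Γ(k+3/2)/(√π k!) for k ≥ 2, has finite squared Shubin norm ∑_{k≥2} k^{−3/2−α} ⟨g⁰, φ_k⟩² < ∞. -/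
open Real

lemma gamma_sq_le (k : ℕ) :
    Real.Gamma ((k:ℝ) + 3/2) ^ 2 ≤ (Nat.factorial k : ℝ) ^ 2 * ((k:ℝ) + 1) := by
  have h1 : ((k:ℝ) + 1) ∈ Set.Ioi (0:ℝ) := by simp; positivity
  have h2 : ((k:ℝ) + 2) ∈ Set.Ioi (0:ℝ) := by simp; positivity
  have hc := Real.convexOn_log_Gamma.2 h1 h2
      (by norm_num : (0:ℝ) ≤ 1/2) (by norm_num : (0:ℝ) ≤ 1/2) (by norm_num)
  have hmid : (1/2 : ℝ) • ((k:ℝ) + 1) + (1/2 : ℝ) • ((k:ℝ) + 2) = (k:ℝ) + 3/2 := by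
    simp [smul_eq_mul]; ring
  rw [hmid] at hc
  simp only [Function.comp_apply, smul_eq_mul] at hc
  have hGpos : 0 < Real.Gamma ((k:ℝ) + 3/2) := Real.Gamma_pos_of_pos (by positivity)
  have hG1 : Real.Gamma ((k:ℝ) + 1) = (Nat.factorial k : ℝ) := by
    rw [← Real.Gamma_nat_eq_factorial k]
  have hG2 : Real.Gamma ((k:ℝ) + 2) = (Nat.factorial (k+1) : ℝ) := by
    have := Real.Gamma_nat_eq_factorial (k+1)
    rw [← this]; push_cast; ring_nf
  have hexp := Real.exp_le_exp.2 (by linarith [hc] :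
      2 * Real.log (Real.Gamma ((k:ℝ) + 3/2)) ≤
        Real.log (Real.Gamma ((k:ℝ) + 1)) + Real.log (Real.Gamma ((k:ℝ) + 2)))
  have hG1pos : 0 < Real.Gamma ((k:ℝ) + 1) := Real.Gamma_pos_of_pos (by positivity)
  have hG2pos : 0 < Real.Gamma ((k:ℝ) + 2) := Real.Gamma_pos_of_pos (by positivity)
  rw [Real.exp_add, Real.exp_log hG1pos, Real.exp_log hG2pos, two_mul, Real.exp_add,
    Real.exp_log hGpos] at hexp
  calc Real.Gamma ((k:ℝ) + 3/2) ^ 2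
      = Real.Gamma ((k:ℝ) + 3/2) * Real.Gamma ((k:ℝ) + 3/2) := sq _
    _ ≤ Real.Gamma ((k:ℝ) + 1) * Real.Gamma ((k:ℝ) + 2) := hexp
    _ = (Nat.factorial k : ℝ) ^ 2 * ((k:ℝ) + 1) := by
        rw [hG1, hG2, Nat.factorial_succ]; push_cast; ring

lemma gamma_le (k : ℕ) :
    Real.Gamma ((k:ℝ) + 3/2) ≤ (Nat.factorial k : ℝ) * Real.sqrt ((k:ℝ) + 1) := by
  have hGpos : 0 < Real.Gamma ((k:ℝ) + 3/2) := Real.Gamma_pos_of_pos (by positivity)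
  have hrhs : (0:ℝ) ≤ (Nat.factorial k : ℝ) * Real.sqrt ((k:ℝ) + 1) := by positivity
  have := gamma_sq_le k
  nlinarith [Real.sq_sqrt (by positivity : (0:ℝ) ≤ (k:ℝ) + 1),
    Real.sqrt_nonneg ((k:ℝ) + 1)]

theorem dirac_datum_shubin_norm_finite (α : ℝ) (hα : 0 < α) :
    Summable (fun k : {m : ℕ // 2 ≤ m} =>
      (k.1 : ℝ) ^ (-(3:ℝ)/2 - α) * Real.Gamma ((k.1 : ℝ) + 3/2) / (Nat.factorial k.1 : ℝ))
    ∧ ∀ g0coef : ℕ → ℝ,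
        (∀ k : ℕ, 2 ≤ k →
          (g0coef k) ^ 2 =
            2 * Real.Gamma ((k : ℝ) + 3/2) / (Real.sqrt Real.pi * (Nat.factorial k : ℝ))) →
        Summable (fun k : {m : ℕ // 2 ≤ m} =>
          (k.1 : ℝ) ^ (-(3:ℝ)/2 - α) * (g0coef k.1) ^ 2) := by
  have hS : Summable (fun n : ℕ => Real.sqrt 2 * (n:ℝ) ^ (-(1:ℝ) - α)) :=
    (Real.summable_nat_rpow.2 (by linarith)).mul_left _
  have hsum : Summable (fun k : {m : ℕ // 2 ≤ m} =>
      (k.1 : ℝ) ^ (-(3:ℝ)/2 - α) * Real.Gamma ((k.1 : ℝ) + 3/2) / (Nat.factorial k.1 : ℝ)) := by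
    apply Summable.of_nonneg_of_le _ _ (hS.subtype _)
    · intro k
      have hG : 0 ≤ Real.Gamma ((k.1:ℝ) + 3/2) := (Real.Gamma_pos_of_pos (by positivity)).le
      positivity
    · rintro ⟨k, hk⟩
      have hk0 : (0:ℝ) < (k:ℝ) := by exact_mod_cast Nat.lt_of_lt_of_le two_pos hk
      have hkp : (0:ℝ) ≤ (k:ℝ) ^ (-(3:ℝ)/2 - α) := by positivity
      have h1 : Real.Gamma ((k:ℝ) + 3/2) / (Nat.factorial k : ℝ) ≤
          Real.sqrt 2 * (k:ℝ) ^ ((1:ℝ)/2) := by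
        rw [div_le_iff₀ (by positivity : (0:ℝ) < (Nat.factorial k : ℝ))]
        calc Real.Gamma ((k:ℝ) + 3/2) ≤ (Nat.factorial k : ℝ) * Real.sqrt ((k:ℝ) + 1) :=
              gamma_le k
          _ ≤ (Nat.factorial k : ℝ) * (Real.sqrt 2 * (k:ℝ) ^ ((1:ℝ)/2)) := by
              apply mul_le_mul_of_nonneg_left _ (by positivity)
              have h2k : (k:ℝ) + 1 ≤ 2 * (k:ℝ) := by
                have : (2:ℝ) ≤ (k:ℝ) := by exact_mod_cast hk
                linarith
              calc Real.sqrt ((k:ℝ) + 1) ≤ Real.sqrt (2 * (k:ℝ)) :=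
                    Real.sqrt_le_sqrt h2k
                _ = Real.sqrt 2 * Real.sqrt (k:ℝ) := Real.sqrt_mul (by norm_num) _
                _ = Real.sqrt 2 * (k:ℝ) ^ ((1:ℝ)/2) := by
                    rw [Real.sqrt_eq_rpow (k:ℝ)]
          _ = Real.sqrt 2 * (k:ℝ) ^ ((1:ℝ)/2) * (Nat.factorial k : ℝ) := by ring
      calc (k:ℝ) ^ (-(3:ℝ)/2 - α) * Real.Gamma ((k:ℝ) + 3/2) / (Nat.factorial k : ℝ)
          = (k:ℝ) ^ (-(3:ℝ)/2 - α) * (Real.Gamma ((k:ℝ) + 3/2) / (Nat.factorial k : ℝ)) := by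
            ring
        _ ≤ (k:ℝ) ^ (-(3:ℝ)/2 - α) * (Real.sqrt 2 * (k:ℝ) ^ ((1:ℝ)/2)) :=
            mul_le_mul_of_nonneg_left h1 hkp
        _ = Real.sqrt 2 * (k:ℝ) ^ (-(1:ℝ) - α) := by
            rw [mul_left_comm, ← Real.rpow_add hk0]
            norm_num
            ring_nf
  refine ⟨hsum, fun g0coef hg => ?_⟩
  have := hsum.mul_left (2 / Real.sqrt Real.pi)
  apply this.congr
  rintro ⟨k, hk⟩
  have hπ : (0:ℝ) < Real.sqrt Real.pi := Real.sqrt_pos.2 Real.pi_pos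
  have hf : (0:ℝ) < (Nat.factorial k : ℝ) := by positivity
  rw [hg k hk]
  field_simp
end
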